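/- arXiv:2505.03482 — 3 statements merged into one kernel-verified Lean document; each statement's English description precedes it below -/
import Mathlib

section
/- Let S = {e ∈ ℝ^n : V_s e ≤ 1} be a compact polytope containing 0, W ⊆ ℝ^n a compact set, and Φ ∈ ℝ^{n×n}. Define e_max := (max_{e∈S} [V_s Φ e]_j)_j and w_max := (max_{w∈W} [V_s w]_j)_j componentwise. Then for nonnegative scalars α, α', the condition α·e_max + w_max ≤ α'·1 (componentwise) implies the set inclusion Φ(αS) ⊕ W ⊆ α'S, where αS := {αe : e ∈ S}. -/
/-!
By linearity, `V_s (Φ (α e) + w) = α V_s Φ e + V_s w ≤ α e_max + w_max ≤ α' 1`. For `α' > 0` this is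
membership in `α' S` after dividing by `α'`. For `α' = 0` the point lies in the recession cone
`{x | V_s x ≤ 0}` of `S`, which is trivial because `S` is bounded, so the point is `0 ∈ 0 • S`.
-/

open Set Pointwise

theorem eq_zero_of_forall_nonneg_smul_mem {E : Type*} [NormedAddCommGroup E] [NormedSpace ℝ E]
    {S : Set E} (hS : Bornology.IsBounded S) {x : E} (hx : ∀ t : ℝ, 0 ≤ t → t • x ∈ S) :
    x = 0 := by
  by_contra hne
  obtain ⟨C, hC⟩ := hS.exists_norm_le
  have hxpos : 0 < ‖x‖ := norm_pos_iff.mpr hne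
  have ht : 0 ≤ (|C| + 1) / ‖x‖ := by positivity
  have hbound := hC _ (hx _ ht)
  rw [norm_smul, Real.norm_of_nonneg ht, div_mul_cancel₀ _ hxpos.ne'] at hbound
  linarith [le_abs_self C]

section Polytope

variable {m n : Type*} [Fintype n] (A : Matrix m n ℝ)

theorem eq_zero_of_mulVec_nonpos (hS : Bornology.IsBounded {e : n → ℝ | A.mulVec e ≤ 1})
    {x : n → ℝ} (hx : A.mulVec x ≤ 0) : x = 0 :=
  eq_zero_of_forall_nonneg_smul_mem hS fun t ht => by
    rw [mem_ofPred_eq, Matrix.mulVec_smul]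
    exact (smul_nonpos_of_nonneg_of_nonpos ht hx).trans zero_le_one

theorem mem_smul_polytope_iff {c : ℝ} (hc : 0 < c) {x : n → ℝ} :
    x ∈ c • {e : n → ℝ | A.mulVec e ≤ 1} ↔ A.mulVec x ≤ c • 1 := by
  rw [mem_smul_set_iff_inv_smul_mem₀ hc.ne', mem_ofPred_eq, Matrix.mulVec_smul,
    inv_smul_le_iff_of_pos hc]

theorem mem_smul_polytope_of_mulVec_le (hS : Bornology.IsBounded {e : n → ℝ | A.mulVec e ≤ 1})
    (hne : {e : n → ℝ | A.mulVec e ≤ 1}.Nonempty) {c : ℝ} (hc : 0 ≤ c) {x : n → ℝ}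
    (hx : A.mulVec x ≤ c • 1) : x ∈ c • {e : n → ℝ | A.mulVec e ≤ 1} := by
  rcases hc.eq_or_lt with rfl | hc
  · rw [zero_smul] at hx
    rw [zero_smul_set hne, eq_zero_of_mulVec_nonpos A hS hx]
    rfl
  · exact (mem_smul_polytope_iff A hc).mpr hx

end Polytope

theorem stmt_6_general {p n : ℕ} (Vs : Matrix (Fin p) (Fin n) ℝ)
    (Φ : Matrix (Fin n) (Fin n) ℝ) (W : Set (Fin n → ℝ))
    (hS : IsCompact {e : Fin n → ℝ | Vs.mulVec e ≤ 1})
    (emax wmax : Fin p → ℝ)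
    (hemax : ∀ j, IsLUB ((fun e => Vs.mulVec (Φ.mulVec e) j) ''
      {e : Fin n → ℝ | Vs.mulVec e ≤ 1}) (emax j))
    (hwmax : ∀ j, IsLUB ((fun w => Vs.mulVec w j) '' W) (wmax j))
    (α α' : ℝ) (hα : 0 ≤ α) (hα' : 0 ≤ α')
    (h : α • emax + wmax ≤ α' • (1 : Fin p → ℝ)) :
    ∀ e ∈ {e : Fin n → ℝ | Vs.mulVec e ≤ 1}, ∀ w ∈ W,
      Φ.mulVec (α • e) + w ∈ α' • {e : Fin n → ℝ | Vs.mulVec e ≤ 1} := by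
  intro e he w hw
  refine mem_smul_polytope_of_mulVec_le Vs hS.isBounded ⟨e, he⟩ hα' (le_trans ?_ h)
  rw [Matrix.mulVec_add, Matrix.mulVec_smul, Matrix.mulVec_smul]
  exact add_le_add (smul_le_smul_of_nonneg_left (fun j => (hemax j).1 ⟨e, he, rfl⟩) hα)
    fun j => (hwmax j).1 ⟨w, hw, rfl⟩

theorem stmt_6 {p n : ℕ} (Vs : Matrix (Fin p) (Fin n) ℝ)
    (Φ : Matrix (Fin n) (Fin n) ℝ) (W : Set (Fin n → ℝ)) (hWc : IsCompact W)
    (hS : IsCompact {e : Fin n → ℝ | Vs.mulVec e ≤ 1})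
    (h0 : (0 : Fin n → ℝ) ∈ {e : Fin n → ℝ | Vs.mulVec e ≤ 1})
    (emax wmax : Fin p → ℝ)
    (hemax : ∀ j, IsLUB ((fun e => Vs.mulVec (Φ.mulVec e) j) ''
      {e : Fin n → ℝ | Vs.mulVec e ≤ 1}) (emax j))
    (hwmax : ∀ j, IsLUB ((fun w => Vs.mulVec w j) '' W) (wmax j))
    (α α' : ℝ) (hα : 0 ≤ α) (hα' : 0 ≤ α')
    (h : α • emax + wmax ≤ α' • (1 : Fin p → ℝ)) :
    ∀ e ∈ {e : Fin n → ℝ | Vs.mulVec e ≤ 1}, ∀ w ∈ W,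
      Φ.mulVec (α • e) + w ∈ α' • {e : Fin n → ℝ | Vs.mulVec e ≤ 1} :=
  stmt_6_general Vs Φ W hS emax wmax hemax hwmax α α' hα hα' h
end

section
/- Conversely, for the sets of the previous context, if α > 0 and Φ(αS) ⊕ W ⊆ α'S, then α·e_max + w_max ≤ α'·1 componentwise; hence for α ≥ 0 the inclusion Φ(αS) ⊕ W ⊆ α'S holds if and only if α·e_max + w_max ≤ α'·1 (for α = 0 the forward direction requires 0 ∈ Φ S, e.g. 0 ∈ S). -/
/-! For `α' > 0`, `x ∈ α' • S` iff `Vs *ᵥ x ≤ α' • 1`; for `α' = 0` the same holds because a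
bounded polyhedron `{e | Vs *ᵥ e ≤ 1}` has trivial recession cone `{x | Vs *ᵥ x ≤ 0}`. Row `j`
of `Vs *ᵥ (Φ *ᵥ (α • e) + w)` is `α * (Vs *ᵥ Φ *ᵥ e) j + (Vs *ᵥ w) j`, and for `α ≥ 0` the
supremum of these values over `e ∈ S`, `w ∈ W` is `α * emax j + wmax j`. So the inclusion
holds iff `α' • 1` bounds every such supremum. -/

open Set Pointwise Matrix

namespace Matrix

variable {m n : Type*} [Fintype n] {A : Matrix m n ℝ}

theorem eq_zero_of_mulVec_nonpos (hA : Bornology.IsBounded {e | A *ᵥ e ≤ 1}) {x : n → ℝ}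
    (hx : A *ᵥ x ≤ 0) : x = 0 := by
  obtain ⟨C, hC⟩ := isBounded_iff_forall_norm_le.mp hA
  have ray : ∀ t : ℝ, 0 ≤ t → t * ‖x‖ ≤ C := fun t ht => by
    simpa [norm_smul, abs_of_nonneg ht] using hC (t • x) fun i => by
      simpa [mulVec_smul] using (mul_nonpos_of_nonneg_of_nonpos ht (hx i)).trans zero_le_one
  by_contra hx0
  have hpos : 0 < ‖x‖ := norm_pos_iff.mpr hx0
  have := ray ((|C| + 1) / ‖x‖) (by positivity)
  rw [div_mul_cancel₀ _ hpos.ne'] at this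
  linarith [le_abs_self C]

theorem mem_smul_setOf_mulVec_le_one_iff (hA : Bornology.IsBounded {e | A *ᵥ e ≤ 1}) {c : ℝ}
    (hc : 0 ≤ c) {x : n → ℝ} : x ∈ c • {e | A *ᵥ e ≤ 1} ↔ A *ᵥ x ≤ c • 1 := by
  rcases hc.eq_or_lt with rfl | hc
  · rw [zero_smul_set ⟨0, by simp⟩, zero_smul, mem_zero]
    exact ⟨fun hx => by simp [hx], eq_zero_of_mulVec_nonpos hA⟩
  · rw [mem_smul_set_iff_inv_smul_mem₀ hc.ne', mem_ofPred_eq, mulVec_smul]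
    simp only [Pi.le_def, Pi.smul_apply, smul_eq_mul, Pi.one_apply, mul_one]
    exact forall_congr' fun i => (inv_mul_le_iff₀ hc).trans (by rw [mul_one])

end Matrix

theorem mul_add_le_iff_of_isLUB {ι κ : Type*} {f : ι → ℝ} {g : κ → ℝ} {s : Set ι} {t : Set κ}
    {a b α c : ℝ} (hα : 0 ≤ α) (ha : IsLUB (f '' s) a) (hb : IsLUB (g '' t) b) :
    α * a + b ≤ c ↔ ∀ x ∈ s, ∀ y ∈ t, α * f x + g y ≤ c := by
  rw [isLUB_le_iff ((ha.mul_left hα).add hb)]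
  simp only [mem_upperBounds, ← image2_add, forall_mem_image2, forall_mem_image]

theorem stmt_7_general {p n : ℕ} (Vs : Matrix (Fin p) (Fin n) ℝ)
    (Φ : Matrix (Fin n) (Fin n) ℝ) (W : Set (Fin n → ℝ))
    (hS : IsCompact {e : Fin n → ℝ | Vs.mulVec e ≤ 1})
    (emax wmax : Fin p → ℝ)
    (hemax : ∀ j, IsLUB ((fun e => Vs.mulVec (Φ.mulVec e) j) ''
      {e : Fin n → ℝ | Vs.mulVec e ≤ 1}) (emax j))
    (hwmax : ∀ j, IsLUB ((fun w => Vs.mulVec w j) '' W) (wmax j)) :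
    (∀ α α' : ℝ, 0 < α → 0 ≤ α' →
      (∀ e ∈ {e : Fin n → ℝ | Vs.mulVec e ≤ 1}, ∀ w ∈ W,
        Φ.mulVec (α • e) + w ∈ α' • {e : Fin n → ℝ | Vs.mulVec e ≤ 1}) →
      α • emax + wmax ≤ α' • (1 : Fin p → ℝ)) ∧
    (∀ α α' : ℝ, 0 ≤ α → 0 ≤ α' →
      ((∀ e ∈ {e : Fin n → ℝ | Vs.mulVec e ≤ 1}, ∀ w ∈ W,
        Φ.mulVec (α • e) + w ∈ α' • {e : Fin n → ℝ | Vs.mulVec e ≤ 1}) ↔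
      α • emax + wmax ≤ α' • (1 : Fin p → ℝ))) := by
  have inclusion_iff : ∀ α α' : ℝ, 0 ≤ α → 0 ≤ α' →
      ((∀ e ∈ {e : Fin n → ℝ | Vs *ᵥ e ≤ 1}, ∀ w ∈ W,
        Φ *ᵥ (α • e) + w ∈ α' • {e : Fin n → ℝ | Vs *ᵥ e ≤ 1}) ↔
      α • emax + wmax ≤ α' • (1 : Fin p → ℝ)) := by
    intro α α' hα hα'
    simp only [mem_smul_setOf_mulVec_le_one_iff hS.isBounded hα']
    simp only [mulVec_add, mulVec_smul, Pi.le_def, Pi.add_apply, Pi.smul_apply, smul_eq_mul,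
      Pi.one_apply, mul_one, mul_add_le_iff_of_isLUB hα (hemax _) (hwmax _)]
    exact ⟨fun h i e he w hw => h e he w hw i, fun h e he w hw i => h i e he w hw⟩
  exact ⟨fun α α' hα hα' => (inclusion_iff α α' hα.le hα').mp, inclusion_iff⟩

theorem stmt_7 {p n : ℕ} (Vs : Matrix (Fin p) (Fin n) ℝ)
    (Φ : Matrix (Fin n) (Fin n) ℝ) (W : Set (Fin n → ℝ))
    (hWc : IsCompact W) (hWne : W.Nonempty)
    (hS : IsCompact {e : Fin n → ℝ | Vs.mulVec e ≤ 1})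
    (h0 : (0 : Fin n → ℝ) ∈ {e : Fin n → ℝ | Vs.mulVec e ≤ 1})
    (emax wmax : Fin p → ℝ)
    (hemax : ∀ j, IsLUB ((fun e => Vs.mulVec (Φ.mulVec e) j) ''
      {e : Fin n → ℝ | Vs.mulVec e ≤ 1}) (emax j))
    (hwmax : ∀ j, IsLUB ((fun w => Vs.mulVec w j) '' W) (wmax j)) :
    (∀ α α' : ℝ, 0 < α → 0 ≤ α' →
      (∀ e ∈ {e : Fin n → ℝ | Vs.mulVec e ≤ 1}, ∀ w ∈ W,
        Φ.mulVec (α • e) + w ∈ α' • {e : Fin n → ℝ | Vs.mulVec e ≤ 1}) →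
      α • emax + wmax ≤ α' • (1 : Fin p → ℝ)) ∧
    (∀ α α' : ℝ, 0 ≤ α → 0 ≤ α' →
      ((∀ e ∈ {e : Fin n → ℝ | Vs.mulVec e ≤ 1}, ∀ w ∈ W,
        Φ.mulVec (α • e) + w ∈ α' • {e : Fin n → ℝ | Vs.mulVec e ≤ 1}) ↔
      α • emax + wmax ≤ α' • (1 : Fin p → ℝ))) :=
  stmt_7_general Vs Φ W hS emax wmax hemax hwmax
end

section
/- Suppose n ≥ N−1 is an integer such that every (z, α) ∈ Ω(n) satisfies F̄Ψ^{n+1} z ≤ 1 − h, where Ω(n) := {(z,α) ∈ ℝ^d × ℝ_{≥0}^N : α_i e_max + w_max ≤ α_{i+1}·1 for 0 ≤ i ≤ N−1 (with α_N := 1), and F̄Ψ^i z ≤ 1 − α_i h for 0 ≤ i ≤ n, where α_i := 1 for i ≥ N}. Then every (z,α) ∈ Ω(n) in fact satisfies F̄Ψ^i z ≤ 1 − α_i h for all i ∈ ℕ (with α_i := 1 for i ≥ N); i.e. Ω(n) = Ω(∞). (Hint: for (z,α) ∈ Ω(n), the shifted point (Ψz, (α_1,…,α_{N−1},1)) again lies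 in Ω(n), and induct.) -/
/-!
If `(z, α) ∈ Ω(n)`, then `(Ψ z, (α₁, …, α_{N-1}, 1))` is again in `Ω(n)`: the state constraints
`0, …, n - 1` of the shifted point are the constraints `1, …, n` of the old one, constraint `n` is the
hypothesis on `F̄ Ψ^{n+1}` (as `n + 1 ≥ N`, the scaling there is `1`), and the last coupling
constraint becomes `e_max + w_max ≤ 1`. Iterating the shift `i` times and reading off constraint `0`
of the result gives constraint `i` of the original point.
-/

open Set

/-- Extension of a finite scaling sequence by `1` beyond the horizon `N`. -/
def extScal {N : ℕ} (α : Fin N → ℝ) (i : ℕ) : ℝ :=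
  if hi : i < N then α ⟨i, hi⟩ else 1

/-- The constraint set `Ω(n)` of the homothetic tube MPC problem. -/
def Omega {c d p N : ℕ} (Fbar : Matrix (Fin c) (Fin d) ℝ)
    (Ψ : Matrix (Fin d) (Fin d) ℝ) (h : Fin c → ℝ) (emax : Fin p → ℝ)
    (wmax : Fin p → ℝ) (n : ℕ) : Set ((Fin d → ℝ) × (Fin N → ℝ)) :=
  {zα | (∀ i, 0 ≤ zα.2 i) ∧
    (∀ i ≤ n, Fbar.mulVec ((Ψ ^ i).mulVec zα.1) ≤ 1 - extScal zα.2 i • h) ∧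
    (∀ i < N, extScal zα.2 i • emax + wmax ≤ extScal zα.2 (i + 1) • (1 : Fin p → ℝ))}

open Matrix

def shiftScal {N : ℕ} (α : Fin N → ℝ) (j : Fin N) : ℝ := extScal α (j + 1)

section Scaling

variable {N : ℕ}

lemma extScal_of_le (α : Fin N → ℝ) {i : ℕ} (hi : N ≤ i) : extScal α i = 1 :=
  dif_neg (not_lt.2 hi)

lemma extScal_nonneg {α : Fin N → ℝ} (hα : ∀ j, 0 ≤ α j) (i : ℕ) : 0 ≤ extScal α i := by
  unfold extScal
  split_ifs
  exacts [hα _, zero_le_one]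

lemma extScal_shiftScal (α : Fin N → ℝ) (i : ℕ) :
    extScal (shiftScal α) i = extScal α (i + 1) := by
  by_cases hi : i < N
  · exact dif_pos hi
  · rw [extScal_of_le _ (not_lt.1 hi), extScal_of_le _ (by omega)]

lemma extScal_iterate_shiftScal (α : Fin N → ℝ) (k i : ℕ) :
    extScal (shiftScal^[k] α) i = extScal α (i + k) := by
  induction k generalizing i with
  | zero => rfl
  | succ k ih =>
    rw [Function.iterate_succ_apply', extScal_shiftScal, ih, add_right_comm, add_assoc]

lemma scaling_coupling_shiftScal {p : ℕ} {emax wmax : Fin p → ℝ} (hew : emax + wmax ≤ 1)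
    {α : Fin N → ℝ}
    (hα : ∀ i < N, extScal α i • emax + wmax ≤ extScal α (i + 1) • (1 : Fin p → ℝ)) :
    ∀ i < N, extScal (shiftScal α) i • emax + wmax ≤
      extScal (shiftScal α) (i + 1) • (1 : Fin p → ℝ) := by
  intro i hi
  simp only [extScal_shiftScal]
  rcases lt_or_ge (i + 1) N with hlt | hge
  · exact hα (i + 1) hlt
  · rwa [extScal_of_le α hge, extScal_of_le α (by omega), one_smul, one_smul]

end Scaling

section Shift

variable {c d p N : ℕ} {Fbar : Matrix (Fin c) (Fin d) ℝ} {Ψ : Matrix (Fin d) (Fin d) ℝ}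
  {h : Fin c → ℝ} {emax wmax : Fin p → ℝ} {n : ℕ}

lemma shift_mem_Omega (hew : emax + wmax ≤ 1) (hn : N ≤ n + 1) {z : Fin d → ℝ} {α : Fin N → ℝ}
    (hz : (z, α) ∈ Omega Fbar Ψ h emax wmax n) (hsat : Fbar *ᵥ (Ψ ^ (n + 1) *ᵥ z) ≤ 1 - h) :
    (Ψ *ᵥ z, shiftScal α) ∈ Omega Fbar Ψ h emax wmax n := by
  obtain ⟨hα, hstate, hcoupling⟩ := hz
  refine ⟨fun j => extScal_nonneg hα _, fun i hi => ?_, scaling_coupling_shiftScal hew hcoupling⟩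
  dsimp only
  rw [mulVec_mulVec z (Ψ ^ i), ← pow_succ, extScal_shiftScal]
  rcases hi.lt_or_eq with hlt | rfl
  · exact hstate (i + 1) hlt
  · rwa [extScal_of_le α hn, one_smul]

lemma iterate_shift_mem_Omega (hew : emax + wmax ≤ 1) (hn : N ≤ n + 1)
    (hsat : ∀ zα ∈ Omega (N := N) Fbar Ψ h emax wmax n, Fbar *ᵥ (Ψ ^ (n + 1) *ᵥ zα.1) ≤ 1 - h)
    {z : Fin d → ℝ} {α : Fin N → ℝ} (hz : (z, α) ∈ Omega Fbar Ψ h emax wmax n) (k : ℕ) :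
    (Ψ ^ k *ᵥ z, shiftScal^[k] α) ∈ Omega Fbar Ψ h emax wmax n := by
  induction k with
  | zero => rwa [pow_zero, one_mulVec, Function.iterate_zero_apply]
  | succ k ih =>
    rw [pow_succ', ← mulVec_mulVec, Function.iterate_succ_apply']
    exact shift_mem_Omega hew hn ih (hsat (_, _) ih)

end Shift

theorem stmt_11_general {c d p N : ℕ} (Fbar : Matrix (Fin c) (Fin d) ℝ)
    (Ψ : Matrix (Fin d) (Fin d) ℝ) (h : Fin c → ℝ) (emax wmax : Fin p → ℝ)
    (hew : emax + wmax ≤ 1)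
    (n : ℕ) (hn : N - 1 ≤ n)
    (hsat : ∀ zα ∈ Omega (N := N) Fbar Ψ h emax wmax n,
      Fbar.mulVec ((Ψ ^ (n + 1)).mulVec zα.1) ≤ 1 - h) :
    ∀ zα ∈ Omega (N := N) Fbar Ψ h emax wmax n, ∀ i : ℕ,
      Fbar.mulVec ((Ψ ^ i).mulVec zα.1) ≤ 1 - extScal zα.2 i • h := by
  rintro ⟨z, α⟩ hz i
  have hshifted := (iterate_shift_mem_Omega hew (by omega) hsat hz i).2.1 0 (Nat.zero_le n)
  simpa [extScal_iterate_shiftScal] using hshifted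

theorem stmt_11 {c d p N : ℕ} (Fbar : Matrix (Fin c) (Fin d) ℝ)
    (Ψ : Matrix (Fin d) (Fin d) ℝ) (h : Fin c → ℝ) (emax wmax : Fin p → ℝ)
    (hh : (0 : Fin c → ℝ) ≤ h) (hew : emax + wmax ≤ 1)
    (n : ℕ) (hn : N - 1 ≤ n)
    (hsat : ∀ zα ∈ Omega (N := N) Fbar Ψ h emax wmax n,
      Fbar.mulVec ((Ψ ^ (n + 1)).mulVec zα.1) ≤ 1 - h) :
    ∀ zα ∈ Omega (N := N) Fbar Ψ h emax wmax n, ∀ i : ℕ,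
      Fbar.mulVec ((Ψ ^ i).mulVec zα.1) ≤ 1 - extScal zα.2 i • h :=
  stmt_11_general Fbar Ψ h emax wmax hew n hn hsat
end
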